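/- Let r ≥ 3 and X ⊆ [2, n] with |X| ≤ r, X ⊄ [2, r+1], and suppose either |X| ≥ 4, or |X| = 3 with {2,3} ⊄ X, or |X| = 2 with 2 ∉ X and 3 ∉ X, or |X| = 1. Then for all sufficiently large n (depending on r and X ∩ [2,2r]), X is good: every left-compressed intersecting family 𝒜 ⊆ [n]^(r) satisfies |𝒜(X)| ≤ |𝒮(X)|. -/

import Mathlib

open Finset

/-- The ij-compression of a finite set: replace j by i if possible. -/
def comp (i j : ℕ) (A : Finset ℕ) : Finset ℕ :=
  if j ∈ A ∧ i ∉ A then insert i (A.erase j) else A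

/-- The ij-compression of a family of sets. -/
def compFam (i j : ℕ) (𝒜 : Finset (Finset ℕ)) : Finset (Finset ℕ) :=
  (𝒜.filter (fun A => comp i j A ∈ 𝒜)) ∪
    ((𝒜.filter (fun A => comp i j A ∉ 𝒜)).image (comp i j))

/-- A family is intersecting if any two members meet. -/
def IsIntersecting (𝒜 : Finset (Finset ℕ)) : Prop :=
  ∀ A ∈ 𝒜, ∀ B ∈ 𝒜, (A ∩ B).Nonempty

/-- A family is left-compressed if it is invariant under all ij-compressions, i < j. -/
def LeftCompressed (𝒜 : Finset (Finset ℕ)) : Prop :=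
  ∀ i j : ℕ, 1 ≤ i → i < j → compFam i j 𝒜 = 𝒜

/-- The compression order: same size and the k-th smallest element of `A` is at most
the k-th smallest element of `B`. -/
def domLE (A B : Finset ℕ) : Prop :=
  A.card = B.card ∧ ∀ (k : ℕ) (a b : ℕ), (A.sort (· ≤ ·))[k]? = some a →
    (B.sort (· ≤ ·))[k]? = some b → a ≤ b

/-- `A ≺ G` : `A` is generated by `G`, i.e. `|G| ≤ |A|` and the k-th smallest element
of `A` is at most the k-th smallest element of `G` for `k ≤ |G|`. -/
def prec (A G : Finset ℕ) : Prop :=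
  G.card ≤ A.card ∧ ∀ (k : ℕ) (a g : ℕ), (A.sort (· ≤ ·))[k]? = some a →
    (G.sort (· ≤ ·))[k]? = some g → a ≤ g

/-- The r-element subsets of [n] = {1, ..., n}. -/
def uniformOn (n r : ℕ) : Finset (Finset ℕ) := (Icc 1 n).powersetCard r

/-- The family ⟨𝒢⟩_r^n generated by 𝒢 under inclusion. -/
def genSub (r n : ℕ) (𝒢 : Finset (Finset ℕ)) : Finset (Finset ℕ) :=
  (uniformOn n r).filter (fun A => ∃ G ∈ 𝒢, G ⊆ A)

open Classical in
/-- The family ⟨𝒢⟩_r^n generated by 𝒢 under ≺. -/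
noncomputable def genP (r n : ℕ) (𝒢 : Finset (Finset ℕ)) : Finset (Finset ℕ) :=
  (uniformOn n r).filter (fun A => ∃ G ∈ 𝒢, prec A G)

/-- ℱ(X) : the members of ℱ meeting X. -/
def hitting (ℱ : Finset (Finset ℕ)) (X : Finset ℕ) : Finset (Finset ℕ) :=
  ℱ.filter (fun A => (A ∩ X).Nonempty)

/-- The star at 1 in [n]^(r). -/
def star (n r : ℕ) : Finset (Finset ℕ) := (uniformOn n r).filter (fun A => 1 ∈ A)

/-- A maximal left-compressed intersecting subfamily of [n]^(r). -/
def MaxLCI (n r : ℕ) (𝒜 : Finset (Finset ℕ)) : Prop :=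
  𝒜 ⊆ uniformOn n r ∧ LeftCompressed 𝒜 ∧ IsIntersecting 𝒜 ∧
    ∀ B ∈ uniformOn n r, B ∉ 𝒜 → ¬ IsIntersecting (insert B 𝒜)

/-- X is good for n and r. -/
def IsGood (n r : ℕ) (X : Finset ℕ) : Prop :=
  ∀ 𝒜 ⊆ uniformOn n r, LeftCompressed 𝒜 → IsIntersecting 𝒜 →
    (hitting 𝒜 X).card ≤ (hitting (star n r) X).card

/-!
Members of `𝒜(X)` containing `1` lie in `𝒮(X)`, so it suffices to bound the members `A ∌ 1` of
`𝒜(X)` by the members of `𝒮(X)` missing from `𝒜`. If some `A ∌ 1` exists, compression puts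
`[2, r+1]` in `𝒜`, so none of the `≈ n^(r-2)` sets `{1, x} ∪ S` with `x ∈ X \ [2, r+1]` and
`S ⊆ [r+2, n]` is in `𝒜`. On the other side, each `A ∌ 1` meets the window `Z = [1, 2r+1]` in at
least two points (otherwise compressing it yields a member disjoint from it), and only `O(n^(r-3))`
of them meet `Z` in three or more. Those with a two-point trace compress onto trace `{2, 3}`, so
if that class is `O(n^(r-3))` we are done. Otherwise it is too large to be avoided by any `r`-set:
every member of `𝒜` meets `{2, 3}`, and every two-point trace is `{2, 3}`. If `X` misses `{2, 3}`,
these members meet `X` outside `Z`, again `O(n^(r-3))` of them; else `X` has two points `a, b ≥ 4`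
and the sets `{1, a} ∪ S`, `{1, b} ∪ S` avoiding `{2, 3}` outnumber the members of trace `{2, 3}`.
-/

theorem mem_uniformOn {n r : ℕ} {B : Finset ℕ} : B ∈ uniformOn n r ↔ B ⊆ Icc 1 n ∧ B.card = r :=
  mem_powersetCard

theorem mem_star {n r : ℕ} {B : Finset ℕ} : B ∈ star n r ↔ B ∈ uniformOn n r ∧ 1 ∈ B :=
  mem_filter

theorem mem_hitting {ℱ : Finset (Finset ℕ)} {X A : Finset ℕ} :
    A ∈ hitting ℱ X ↔ A ∈ ℱ ∧ (A ∩ X).Nonempty :=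
  mem_filter

theorem Finset.eq_of_inter_eq_of_sdiff_eq {α : Type*} [DecidableEq α] {A A' Z : Finset α}
    (hinter : A ∩ Z = A' ∩ Z) (hsdiff : A \ Z = A' \ Z) : A = A' := by
  rw [← sdiff_union_inter A Z, hinter, hsdiff, sdiff_union_inter]

theorem lt_of_card_inter_Icc_le_one {A : Finset ℕ} (hne : A.Nonempty) (hA : ∀ a ∈ A, 1 ≤ a)
    {m : ℕ} (h : (A ∩ Icc 1 m).card ≤ 1) {y : ℕ} (hy : y ∈ A) (hym : y ≠ A.min' hne) : m < y := by
  by_contra! hym'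
  refine hym (card_le_one.1 h y (by simp [hy, hym', hA y hy]) _ ?_)
  simp only [mem_inter, mem_Icc]
  exact ⟨min'_mem A hne, hA _ (min'_mem A hne), (min'_le A y hy).trans hym'⟩

namespace LeftCompressed

variable {𝒜 : Finset (Finset ℕ)} {A D : Finset ℕ}

theorem comp_mem (h𝒜 : LeftCompressed 𝒜) (hA : A ∈ 𝒜) {i j : ℕ} (hi : 1 ≤ i) (hij : i < j) :
    comp i j A ∈ 𝒜 := by
  by_contra hc
  have h : comp i j A ∈ compFam i j 𝒜 :=
    mem_union_right _ (mem_image_of_mem _ (mem_filter.2 ⟨hA, hc⟩))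
  exact hc (h𝒜 i j hi hij ▸ h)

theorem insert_erase_mem (h𝒜 : LeftCompressed 𝒜) (hA : A ∈ 𝒜) {i j : ℕ} (hi : 1 ≤ i)
    (hij : i < j) (hj : j ∈ A) (hiA : i ∉ A) : insert i (A.erase j) ∈ 𝒜 := by
  simpa only [comp, hj, hiA, not_false_eq_true, and_self, if_true] using h𝒜.comp_mem hA hi hij

/-- `D` is reached from `A` by repeatedly trading an element of `A \ D` for a smaller one of
`D \ A`. -/
theorem mem_of_lt (h𝒜 : LeftCompressed 𝒜) (hA : A ∈ 𝒜) (hcard : D.card = A.card)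
    (hD : ∀ d ∈ D, 1 ≤ d) (hlt : ∀ a ∈ A \ D, ∀ d ∈ D \ A, d < a) : D ∈ 𝒜 := by
  obtain ⟨k, hk⟩ : ∃ k, (A \ D).card = k := ⟨_, rfl⟩
  induction k generalizing A with
  | zero =>
    rwa [← eq_of_subset_of_card_le (sdiff_eq_empty_iff_subset.1 (card_eq_zero.1 hk)) hcard.le]
  | succ k ih =>
    obtain ⟨a, ha⟩ := card_pos.1 (hk ▸ k.succ_pos : 0 < (A \ D).card)
    obtain ⟨d, hd⟩ := card_pos.1
      ((card_sdiff_comm hcard.symm).symm ▸ hk ▸ k.succ_pos : 0 < (D \ A).card)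
    obtain ⟨haA, haD⟩ := mem_sdiff.1 ha
    obtain ⟨hdD, hdA⟩ := mem_sdiff.1 hd
    have hsdiff : insert d (A.erase a) \ D = (A \ D).erase a := by
      rw [insert_sdiff_of_mem _ hdD, erase_sdiff_comm]
    refine ih (h𝒜.insert_erase_mem hA (hD d hdD) (hlt a ha d hd) haA hdA) ?_ ?_ ?_
    · rw [card_insert_of_notMem (fun h => hdA (mem_of_mem_erase h)), card_erase_of_mem haA,
        hcard, Nat.sub_add_cancel (card_pos.2 ⟨a, haA⟩)]
    · intro a' ha' d' hd'
      rw [hsdiff] at ha'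
      refine hlt a' (mem_of_mem_erase ha') d' ?_
      simp only [mem_sdiff, mem_insert, mem_erase, not_or] at hd' ⊢
      exact ⟨hd'.1, fun h => hd'.2.2 ⟨fun he => haD (he ▸ hd'.1), h⟩⟩
    · rw [hsdiff, card_erase_of_mem ha, hk, Nat.add_sub_cancel]

end LeftCompressed

section Uniform

variable {n r : ℕ} {𝒜 : Finset (Finset ℕ)} {A : Finset ℕ}

theorem one_lt_of_mem_uniformOn (hA : A ∈ uniformOn n r) (h1 : 1 ∉ A) {a : ℕ} (ha : a ∈ A) :
    1 < a := by
  have := mem_Icc.1 ((mem_uniformOn.1 hA).1 ha)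
  exact lt_of_le_of_ne this.1 (by rintro rfl; exact h1 ha)

theorem LeftCompressed.Icc_two_mem (h𝒜 : LeftCompressed 𝒜) (hsub : 𝒜 ⊆ uniformOn n r)
    (hA : A ∈ 𝒜) (h1 : 1 ∉ A) : Icc 2 (r + 1) ∈ 𝒜 := by
  refine h𝒜.mem_of_lt hA ?_ (fun d hd => by grind) fun a ha d hd => ?_
  · rw [(mem_uniformOn.1 (hsub hA)).2, Nat.card_Icc]; omega
  · have := one_lt_of_mem_uniformOn (hsub hA) h1 (mem_sdiff.1 ha).1
    simp only [mem_sdiff, mem_Icc] at ha hd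
    omega

theorem IsIntersecting.two_le_card_inter_Icc (hInt : IsIntersecting 𝒜) (h𝒜 : LeftCompressed 𝒜)
    (hsub : 𝒜 ⊆ uniformOn n r) (hA : A ∈ 𝒜) (h1 : 1 ∉ A) :
    2 ≤ (A ∩ Icc 1 (2 * r + 1)).card := by
  by_contra! hsmall
  obtain ⟨hAn, hAr⟩ := mem_uniformOn.1 (hsub hA)
  have hne : A.Nonempty := by simpa using hInt A hA A hA
  have hone : ∀ {a}, a ∈ A → 1 < a := one_lt_of_mem_uniformOn (hsub hA) h1
  set m := A.min' hne
  have hmA : m ∈ A := min'_mem A hne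
  have hm : ∀ y ∈ A, y ≠ m → 2 * r + 1 < y := fun y hy hym =>
    lt_of_card_inter_Icc_le_one hne (fun a ha => (hone ha).le) (Nat.le_of_lt_succ hsmall) hy hym
  obtain ⟨C, hC, hCcard⟩ := exists_subset_card_eq (s := Icc 2 (2 * r + 1) \ A) (n := r - 1) (by
    have h1 := card_sdiff_add_card_inter (Icc 2 (2 * r + 1)) A
    have h2 : (Icc 2 (2 * r + 1) ∩ A).card ≤ (A ∩ Icc 1 (2 * r + 1)).card :=
      card_le_card (inter_comm A _ ▸ inter_subset_inter_left (Icc_subset_Icc (by norm_num) le_rfl))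
    rw [Nat.card_Icc] at h1
    omega)
  have hCA : ∀ c ∈ C, 2 ≤ c ∧ c ≤ 2 * r + 1 ∧ c ∉ A := fun c hc => by
    simpa [and_assoc] using hC hc
  have hr : 1 ≤ r := hAr ▸ card_pos.2 hne
  have hD : insert 1 C ∈ 𝒜 := by
    refine h𝒜.mem_of_lt (h𝒜.insert_erase_mem hA le_rfl (hone hmA) hmA h1) ?_ ?_ ?_
    · rw [card_insert_of_notMem (fun h => by have := hCA 1 h; omega),
        card_insert_of_notMem (fun h => h1 (mem_of_mem_erase h)), card_erase_of_mem hmA]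
      omega
    · intro d hd
      rcases mem_insert.1 hd with rfl | hd
      · rfl
      · exact (hCA d hd).1.trans' (by norm_num)
    · intro a ha d hd
      simp only [mem_sdiff, mem_insert, mem_erase, not_or] at ha hd
      have := hm a (ha.1.resolve_left ha.2.1).2 (ha.1.resolve_left ha.2.1).1
      have := hCA d (hd.1.resolve_left hd.2.1)
      omega
  obtain ⟨y, hy⟩ := hInt A hA _ hD
  rcases mem_insert.1 (mem_inter.1 hy).2 with rfl | hyC
  · exact h1 (mem_inter.1 hy).1
  · exact (hCA y hyC).2.2 (mem_inter.1 hy).1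

theorem LeftCompressed.pair_union_sdiff_mem (h𝒜 : LeftCompressed 𝒜) (hsub : 𝒜 ⊆ uniformOn n r)
    (hA : A ∈ 𝒜) (h1 : 1 ∉ A) {Z : Finset ℕ} (h23 : {2, 3} ⊆ Z) (hT : (A ∩ Z).card = 2) :
    {2, 3} ∪ (A \ Z) ∈ 𝒜 := by
  refine h𝒜.mem_of_lt hA ?_ ?_ fun a ha d hd => ?_
  · rw [card_union_of_disjoint (disjoint_of_subset_left h23 disjoint_sdiff),
      card_pair (by norm_num), ← card_sdiff_add_card_inter A Z, hT, add_comm]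
  · intro d hd
    simp only [mem_union, mem_insert, mem_singleton, mem_sdiff] at hd
    rcases hd with (rfl | rfl) | hd
    · norm_num
    · norm_num
    · exact (one_lt_of_mem_uniformOn (hsub hA) h1 hd.1).le
  · have := one_lt_of_mem_uniformOn (hsub hA) h1 (mem_sdiff.1 ha).1
    simp only [mem_sdiff, mem_union, mem_insert, mem_singleton, not_or] at ha hd
    have hd23 : d = 2 ∨ d = 3 := hd.1.resolve_right fun h => hd.2 h.1
    omega

/-- Compressing either trace element to `1` must leave the other one in `W`. -/
theorem LeftCompressed.inter_eq_of_forall_inter_nonempty (h𝒜 : LeftCompressed 𝒜)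
    (hsub : 𝒜 ⊆ uniformOn n r) {W Z : Finset ℕ} (hmeet : ∀ B ∈ 𝒜, (B ∩ W).Nonempty)
    (h1W : 1 ∉ W) (hWZ : W ⊆ Z) (hW : W.card ≤ 2) (hA : A ∈ 𝒜) (h1 : 1 ∉ A)
    (hT : (A ∩ Z).card = 2) : A ∩ Z = W := by
  have hother : ∀ u ∈ A ∩ Z, ∃ w ∈ W, w ∈ A ∩ Z ∧ w ≠ u := by
    intro u hu
    obtain ⟨w, hw⟩ := hmeet _ (h𝒜.insert_erase_mem hA le_rfl
      (one_lt_of_mem_uniformOn (hsub hA) h1 (mem_inter.1 hu).1) (mem_inter.1 hu).1 h1)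
    obtain ⟨hwB, hwW⟩ := mem_inter.1 hw
    obtain ⟨hwu, hwA⟩ :=
      mem_erase.1 ((mem_insert.1 hwB).resolve_left (by rintro rfl; exact h1W hwW))
    exact ⟨w, hwW, mem_inter.2 ⟨hwA, hWZ hwW⟩, hwu⟩
  obtain ⟨u, v, huv, huvT⟩ := card_eq_two.1 hT
  have hsubW : A ∩ Z ⊆ W := by
    rw [huvT]
    obtain ⟨w, hwW, hwT, hwu⟩ := hother u (by simp [huvT])
    obtain ⟨w', hw'W, hw'T, hw'v⟩ := hother v (by simp [huvT])
    rw [huvT] at hwT hw'T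
    simp only [mem_insert, mem_singleton] at hwT hw'T
    grind [insert_subset_iff]
  exact eq_of_subset_of_card_le hsubW (hW.trans hT.ge)

end Uniform

section Counting

variable {n r : ℕ} {F : Finset (Finset ℕ)}

theorem card_filter_subset_le (hF : F ⊆ uniformOn n r) (T : Finset ℕ) :
    (F.filter (T ⊆ ·)).card ≤ n.choose (r - T.card) := by
  refine (card_le_card_of_injOn (· \ T) (t := (Icc 1 n).powersetCard (r - T.card)) ?_ ?_).trans
    (by simp)
  · intro A hA
    obtain ⟨hAF, hTA⟩ := mem_filter.1 hA
    obtain ⟨hAn, hAr⟩ := mem_uniformOn.1 (hF hAF)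
    exact mem_powersetCard.2 ⟨sdiff_subset.trans hAn, by rw [card_sdiff_of_subset hTA, hAr]⟩
  · intro A hA A' hA' h
    rw [← sdiff_union_of_subset (mem_filter.1 hA).2, ← sdiff_union_of_subset (mem_filter.1 hA').2]
    exact congrArg (· ∪ T) h

theorem card_filter_inter_eq_le (hF : F ⊆ uniformOn n r) (Z T : Finset ℕ) :
    (F.filter (· ∩ Z = T)).card ≤ (Icc 1 n \ Z).card.choose (r - T.card) := by
  refine (card_le_card_of_injOn (· \ Z) (t := (Icc 1 n \ Z).powersetCard (r - T.card)) ?_ ?_).trans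
    (by simp)
  · intro A hA
    obtain ⟨hAF, hAT⟩ := mem_filter.1 hA
    obtain ⟨hAn, hAr⟩ := mem_uniformOn.1 (hF hAF)
    refine mem_powersetCard.2 ⟨sdiff_subset_sdiff hAn subset_rfl, ?_⟩
    rw [← hAT, ← hAr, ← card_sdiff_add_card_inter A Z, Nat.add_sub_cancel]
  · intro A hA A' hA' h
    exact eq_of_inter_eq_of_sdiff_eq ((mem_filter.1 hA).2.trans (mem_filter.1 hA').2.symm) h

theorem card_le_card_mul_choose (hF : F ⊆ uniformOn n r) (T S : Finset ℕ)
    (hFS : ∀ A ∈ F, T ⊆ A ∧ ∃ s ∈ S, s ∉ T ∧ s ∈ A) :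
    F.card ≤ S.card * n.choose (r - (T.card + 1)) := by
  have hcover : F ⊆ (S \ T).biUnion fun s => F.filter (insert s T ⊆ ·) := by
    intro A hA
    obtain ⟨hTA, s, hsS, hsT, hsA⟩ := hFS A hA
    exact mem_biUnion.2 ⟨s, mem_sdiff.2 ⟨hsS, hsT⟩, mem_filter.2 ⟨hA, insert_subset hsA hTA⟩⟩
  calc F.card ≤ ∑ s ∈ S \ T, (F.filter (insert s T ⊆ ·)).card :=
        (card_le_card hcover).trans card_biUnion_le
    _ ≤ ∑ _s ∈ S \ T, n.choose (r - (T.card + 1)) := sum_le_sum fun s hs =>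
        card_insert_of_notMem (mem_sdiff.1 hs).2 ▸ card_filter_subset_le hF (insert s T)
    _ ≤ S.card * n.choose (r - (T.card + 1)) := by
        rw [sum_const, smul_eq_mul]
        exact Nat.mul_le_mul_right _ (card_le_card sdiff_subset)

theorem card_le_two_pow_mul_of_card_filter_inter_eq_le (Z : Finset ℕ) (M : ℕ)
    (hfib : ∀ T ⊆ Z, (F.filter (· ∩ Z = T)).card ≤ M) : F.card ≤ 2 ^ Z.card * M := by
  have himage : (F.image (· ∩ Z)).card ≤ 2 ^ Z.card :=
    card_powerset Z ▸ card_le_card fun T hT => by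
      obtain ⟨A, -, rfl⟩ := mem_image.1 hT
      exact mem_powerset.2 inter_subset_right
  calc F.card ≤ M * (F.image (· ∩ Z)).card := card_le_mul_card_image F M fun T hT => by
        obtain ⟨A, -, rfl⟩ := mem_image.1 hT
        exact hfib _ inter_subset_right
    _ ≤ 2 ^ Z.card * M := by rw [mul_comm]; exact Nat.mul_le_mul_right _ himage

end Counting

section LargeTraceClass

variable {n r : ℕ} {𝒜 : Finset (Finset ℕ)} {Z T : Finset ℕ}

theorem exists_mem_inter_eq_disjoint_sdiff (hsub : 𝒜 ⊆ uniformOn n r)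
    (hbig : r * n.choose (r - (T.card + 1)) < (𝒜.filter (· ∩ Z = T)).card) {S : Finset ℕ}
    (hS : S.card ≤ r) : ∃ A ∈ 𝒜, A ∩ Z = T ∧ Disjoint (A \ Z) S := by
  by_contra! h
  refine hbig.not_ge ((card_le_card_mul_choose ((filter_subset _ _).trans hsub) T S ?_).trans
    (Nat.mul_le_mul_right _ hS))
  intro A hA
  obtain ⟨hA𝒜, hAT⟩ := mem_filter.1 hA
  obtain ⟨s, hsA, hsS⟩ := not_disjoint_iff.1 (h A hA𝒜 hAT)
  obtain ⟨hsA, hsZ⟩ := mem_sdiff.1 hsA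
  exact ⟨hAT ▸ inter_subset_left, s, hsS, fun hsT => hsZ (hAT ▸ hsT |> mem_inter.1).2, hsA⟩

theorem IsIntersecting.inter_nonempty_of_lt_card (hInt : IsIntersecting 𝒜)
    (hsub : 𝒜 ⊆ uniformOn n r)
    (hbig : r * n.choose (r - (T.card + 1)) < (𝒜.filter (· ∩ Z = T)).card)
    {B : Finset ℕ} (hB : B ∈ 𝒜) : (B ∩ T).Nonempty := by
  obtain ⟨A, hA, hAT, hdisj⟩ :=
    exists_mem_inter_eq_disjoint_sdiff hsub hbig (mem_uniformOn.1 (hsub hB)).2.le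
  obtain ⟨y, hy⟩ := hInt A hA B hB
  obtain ⟨hyA, hyB⟩ := mem_inter.1 hy
  by_cases hyZ : y ∈ Z
  · exact ⟨y, mem_inter.2 ⟨hyB, hAT ▸ mem_inter.2 ⟨hyA, hyZ⟩⟩⟩
  · exact absurd hyB (disjoint_left.1 hdisj (mem_sdiff.2 ⟨hyA, hyZ⟩))

end LargeTraceClass

def pairExtensions (c : ℕ) (U : Finset ℕ) (k : ℕ) : Finset (Finset ℕ) :=
  (U.powersetCard k).image fun S => insert 1 (insert c S)

section Witnesses

variable {n r c k : ℕ} {U W X : Finset ℕ} {𝒜 : Finset (Finset ℕ)}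

theorem card_pairExtensions (hc : c ≠ 1) (h1U : 1 ∉ U) (hcU : c ∉ U) :
    (pairExtensions c U k).card = U.card.choose k := by
  have hrecover : ∀ S ∈ U.powersetCard k, ((insert 1 (insert c S)).erase 1).erase c = S := by
    intro S hS
    have hSU := (mem_powersetCard.1 hS).1
    rw [erase_insert fun h => (mem_insert.1 h).elim hc.symm fun h => h1U (hSU h),
      erase_insert fun h => hcU (hSU h)]
  rw [pairExtensions, card_image_of_injOn, card_powersetCard]
  intro S hS S' hS' h
  rw [← hrecover S hS, ← hrecover S' hS']
  exact congrArg (fun B => (B.erase 1).erase c) h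

theorem pairExtensions_subset (hmeet : ∀ B ∈ 𝒜, (B ∩ W).Nonempty) (hcX : c ∈ X)
    (hc : c ∈ Icc 2 n) (hU : U ⊆ Icc 2 n) (hcU : c ∉ U) (hUW : Disjoint (insert 1 (insert c U)) W)
    (hr : 2 ≤ r) : pairExtensions c U (r - 2) ⊆ (hitting (star n r) X).filter (· ∉ 𝒜) := by
  intro B hB
  obtain ⟨S, hS, rfl⟩ := mem_image.1 hB
  obtain ⟨hSU, hScard⟩ := mem_powersetCard.1 hS
  have hBU : insert 1 (insert c S) ⊆ insert 1 (insert c U) :=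
    insert_subset_insert _ (insert_subset_insert _ hSU)
  obtain ⟨hc2, hcn⟩ := mem_Icc.1 hc
  simp only [mem_filter, mem_hitting, mem_star, mem_uniformOn]
  refine ⟨⟨⟨⟨?_, ?_⟩, mem_insert_self _ _⟩, ⟨c, by simp [hcX]⟩⟩, fun hB => ?_⟩
  · refine insert_subset (by simp; omega) (insert_subset ?_ (hSU.trans hU |>.trans ?_))
    · exact mem_Icc.2 ⟨by omega, hcn⟩
    · exact Icc_subset_Icc (by norm_num) le_rfl
  · rw [card_insert_of_notMem, card_insert_of_notMem (fun h => hcU (hSU h)), hScard]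
    · omega
    · simp only [mem_insert, not_or]
      exact ⟨by omega, fun h => by have := mem_Icc.1 (hU (hSU h)); omega⟩
  · obtain ⟨w, hw⟩ := hmeet _ hB
    exact disjoint_left.1 hUW (hBU (mem_inter.1 hw).1) (mem_inter.1 hw).2

theorem choose_le_card_filter_notMem_of_meets_Icc
    (hmeet : ∀ B ∈ 𝒜, (B ∩ Icc 2 (r + 1)).Nonempty) {x : ℕ} (hxX : x ∈ X) (hx : r + 2 ≤ x)
    (hxn : x ≤ n) (hr : 2 ≤ r) :
    (n - (r + 2)).choose (r - 2) ≤ ((hitting (star n r) X).filter (· ∉ 𝒜)).card := by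
  have hU : Icc (r + 2) n \ {x} ⊆ Icc 2 n := sdiff_subset.trans (Icc_subset_Icc (by omega) le_rfl)
  calc (n - (r + 2)).choose (r - 2) = (pairExtensions x (Icc (r + 2) n \ {x}) (r - 2)).card := by
        rw [card_pairExtensions (by omega) (fun h => by simpa using hU h) (by simp),
          card_sdiff_of_subset (by simp; omega), Nat.card_Icc, card_singleton]
        congr 1
        omega
    _ ≤ _ := card_le_card <| pairExtensions_subset hmeet hxX (mem_Icc.2 ⟨by omega, hxn⟩) hU
        (by simp) (disjoint_left.2 fun y hy hyW => by simp at hy hyW; omega) hr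

theorem choose_add_choose_le_card_filter_notMem_of_meets_pair
    (hmeet : ∀ B ∈ 𝒜, (B ∩ {2, 3}).Nonempty) {a b : ℕ} (haX : a ∈ X) (hbX : b ∈ X) (hab : a ≠ b)
    (ha : a ∈ Icc 4 n) (hb : b ∈ Icc 4 n) (hr : 2 ≤ r) :
    (n - 4).choose (r - 2) + (n - 5).choose (r - 2) ≤
      ((hitting (star n r) X).filter (· ∉ 𝒜)).card := by
  simp only [mem_Icc] at ha hb
  have hUa : Icc 4 n \ {a} ⊆ Icc 2 n := sdiff_subset.trans (Icc_subset_Icc (by omega) le_rfl)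
  have hUb : Icc 4 n \ {a, b} ⊆ Icc 2 n := sdiff_subset.trans (Icc_subset_Icc (by omega) le_rfl)
  have hdisj : Disjoint (pairExtensions a (Icc 4 n \ {a}) (r - 2))
      (pairExtensions b (Icc 4 n \ {a, b}) (r - 2)) := by
    refine disjoint_left.2 fun B hB hB' => ?_
    obtain ⟨S, -, rfl⟩ := mem_image.1 hB
    obtain ⟨S', hS', hSS'⟩ := mem_image.1 hB'
    have haS' : a ∈ insert 1 (insert b S') := hSS' ▸ by simp
    simp only [mem_insert] at haS'
    rcases haS' with h | h | h
    · omega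
    · exact hab h
    · simpa using (mem_powersetCard.1 hS').1 h
  calc (n - 4).choose (r - 2) + (n - 5).choose (r - 2) =
        (pairExtensions a (Icc 4 n \ {a}) (r - 2)).card +
          (pairExtensions b (Icc 4 n \ {a, b}) (r - 2)).card := by
        rw [card_pairExtensions (by omega) (fun h => by simpa using hUa h) (by simp),
          card_pairExtensions (by omega) (fun h => by simpa using hUb h) (by simp),
          card_sdiff_of_subset (by simp; omega), card_sdiff_of_subset (by
            simp [insert_subset_iff]; omega), card_pair hab, Nat.card_Icc, card_singleton]
        congr 2
    _ = (pairExtensions a (Icc 4 n \ {a}) (r - 2) ∪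
          pairExtensions b (Icc 4 n \ {a, b}) (r - 2)).card := (card_union_of_disjoint hdisj).symm
    _ ≤ _ := card_le_card <| union_subset
        (pairExtensions_subset hmeet haX (mem_Icc.2 ⟨by omega, ha.2⟩) hUa (by simp)
          (disjoint_left.2 fun y hy hyW => by simp at hy hyW; omega) hr)
        (pairExtensions_subset hmeet hbX (mem_Icc.2 ⟨by omega, hb.2⟩) hUb (by simp)
          (disjoint_left.2 fun y hy hyW => by simp at hy hyW; omega) hr)

end Witnesses

theorem card_hitting_le_of_card_filter_le {n r : ℕ} {𝒜 : Finset (Finset ℕ)} {X : Finset ℕ}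
    (hsub : 𝒜 ⊆ uniformOn n r)
    (h : ((hitting 𝒜 X).filter (1 ∉ ·)).card ≤ ((hitting (star n r) X).filter (· ∉ 𝒜)).card) :
    (hitting 𝒜 X).card ≤ (hitting (star n r) X).card := by
  have hstar : (hitting 𝒜 X).filter (1 ∈ ·) ⊆ (hitting (star n r) X).filter (· ∈ 𝒜) := by
    intro A hA
    simp only [mem_filter, mem_hitting, mem_star] at hA ⊢
    exact ⟨⟨⟨hsub hA.1.1, hA.2⟩, hA.1.2⟩, hA.1.1⟩
  rw [← card_filter_add_card_filter_not (s := hitting 𝒜 X) (1 ∈ ·),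
    ← card_filter_add_card_filter_not (s := hitting (star n r) X) (· ∈ 𝒜)]
  exact add_le_add (card_le_card hstar) h

theorem choose_le_two_mul_choose_pred {n k : ℕ} (h : 2 * k < n) :
    n.choose k ≤ 2 * (n - 1).choose k := by
  obtain ⟨m, rfl⟩ : ∃ m, n = m + 1 := ⟨n - 1, by omega⟩
  rw [Nat.add_sub_cancel]
  refine Nat.le_of_mul_le_mul_right (c := m + 1 - k) ?_ (by omega)
  calc (m + 1).choose k * (m + 1 - k) = m.choose k * (m + 1) := (Nat.choose_mul_succ_eq m k).symm
    _ ≤ m.choose k * (2 * (m + 1 - k)) := Nat.mul_le_mul_left _ (by omega)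
    _ = 2 * m.choose k * (m + 1 - k) := by ring

theorem choose_le_two_pow_mul_choose_sub {n k : ℕ} (c : ℕ) (h : 2 * k + c ≤ n) :
    n.choose k ≤ 2 ^ c * (n - c).choose k := by
  induction c generalizing n with
  | zero => simp
  | succ c ih =>
    calc n.choose k ≤ 2 * (n - 1).choose k := choose_le_two_mul_choose_pred (by omega)
      _ ≤ 2 * (2 ^ c * (n - 1 - c).choose k) := Nat.mul_le_mul_left _ (ih (by omega))
      _ = 2 ^ (c + 1) * (n - (c + 1)).choose k := by
        rw [Nat.sub_sub, add_comm 1 c, pow_succ]; ring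

/-- Shifting `n` by a constant costs at most a constant factor in `n.choose k`, while
`m.choose (k + 1) = m.choose k * (m - k) / (k + 1)` gains a factor linear in `m`. -/
theorem exists_mul_choose_le_choose_sub (K c k : ℕ) :
    ∃ N, ∀ n, N ≤ n → K * n.choose k ≤ (n - c).choose (k + 1) := by
  refine ⟨2 * k + c + K * (k + 1) * 2 ^ c + k + 1, fun n hn => ?_⟩
  have hshift := choose_le_two_pow_mul_choose_sub (k := k) c (n := n) (by omega)
  have hlarge : K * (k + 1) * 2 ^ c ≤ n - c - k := by omega
  refine Nat.le_of_mul_le_mul_right (c := k + 1) ?_ k.succ_pos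
  calc K * n.choose k * (k + 1) ≤ K * (2 ^ c * (n - c).choose k) * (k + 1) :=
        Nat.mul_le_mul_right _ (Nat.mul_le_mul_left _ hshift)
    _ = K * (k + 1) * 2 ^ c * (n - c).choose k := by ring
    _ ≤ (n - c - k) * (n - c).choose k := Nat.mul_le_mul_right _ hlarge
    _ = (n - c).choose (k + 1) * (k + 1) := by rw [Nat.choose_succ_right_eq, mul_comm]

section NonStarPart

variable {n r : ℕ} {𝒜 : Finset (Finset ℕ)}

theorem card_filter_inter_Icc_eq_le_of_card_ne_two (hInt : IsIntersecting 𝒜)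
    (h𝒜 : LeftCompressed 𝒜) (hsub : 𝒜 ⊆ uniformOn n r) {T : Finset ℕ} (hT : T.card ≠ 2) :
    ((𝒜.filter (1 ∉ ·)).filter (· ∩ Icc 1 (2 * r + 1) = T)).card ≤ n.choose (r - 3) := by
  rcases lt_or_gt_of_ne hT with hT | hT
  · refine (card_eq_zero.2 (filter_eq_empty_iff.2 fun A hA hAT => ?_)).trans_le (Nat.zero_le _)
    have := hInt.two_le_card_inter_Icc h𝒜 hsub (mem_filter.1 hA).1 (mem_filter.1 hA).2
    rw [hAT] at this
    omega
  · obtain ⟨T', hT'T, hT'⟩ := exists_subset_card_eq (s := T) (n := 3) (by omega)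
    calc _ ≤ (𝒜.filter (T' ⊆ ·)).card := card_le_card fun A hA => by
          obtain ⟨hA, hAT⟩ := mem_filter.1 hA
          exact mem_filter.2 ⟨(mem_filter.1 hA).1, hT'T.trans (hAT ▸ inter_subset_left)⟩
      _ ≤ n.choose (r - 3) := hT' ▸ card_filter_subset_le hsub T'

theorem card_filter_inter_eq_le_card_filter_inter_eq_pair (h𝒜 : LeftCompressed 𝒜)
    (hsub : 𝒜 ⊆ uniformOn n r) {Z T : Finset ℕ} (h23 : {2, 3} ⊆ Z) (hT : T.card = 2) :
    ((𝒜.filter (1 ∉ ·)).filter (· ∩ Z = T)).card ≤ (𝒜.filter (· ∩ Z = {2, 3})).card := by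
  refine card_le_card_of_injOn (fun A => {2, 3} ∪ (A \ Z)) (fun A hA => ?_) fun A hA A' hA' h => ?_
  · obtain ⟨hA, hAT⟩ := mem_filter.1 hA
    refine mem_filter.2 ⟨h𝒜.pair_union_sdiff_mem hsub (mem_filter.1 hA).1 (mem_filter.1 hA).2 h23
      (hAT ▸ hT), ?_⟩
    rw [union_inter_distrib_right, inter_eq_left.2 h23, sdiff_inter_self, union_empty]
  · have hsdiff : ∀ B : Finset ℕ, ({2, 3} ∪ (B \ Z)) \ Z = B \ Z := fun B => by
      rw [union_sdiff_distrib, sdiff_eq_empty_iff_subset.2 h23, empty_union, Finset.sdiff_idem]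
    refine eq_of_inter_eq_of_sdiff_eq ((mem_filter.1 hA).2.trans (mem_filter.1 hA').2.symm) ?_
    rw [← hsdiff A, ← hsdiff A']
    exact congrArg (· \ Z) h

theorem card_filter_one_notMem_le_of_card_le (hInt : IsIntersecting 𝒜) (h𝒜 : LeftCompressed 𝒜)
    (hsub : 𝒜 ⊆ uniformOn n r) (hr : 1 ≤ r)
    (hsmall : (𝒜.filter (· ∩ Icc 1 (2 * r + 1) = {2, 3})).card ≤ r * n.choose (r - 3)) :
    (𝒜.filter (1 ∉ ·)).card ≤ 2 ^ (2 * r + 1) * (r * n.choose (r - 3)) := by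
  have h := card_le_two_pow_mul_of_card_filter_inter_eq_le (F := 𝒜.filter (1 ∉ ·))
    (Icc 1 (2 * r + 1)) (r * n.choose (r - 3)) fun T _ => ?_
  · simpa using h
  by_cases hT : T.card = 2
  · exact (card_filter_inter_eq_le_card_filter_inter_eq_pair h𝒜 hsub
      (by simp [insert_subset_iff]; omega) hT).trans hsmall
  · exact (card_filter_inter_Icc_eq_le_of_card_ne_two hInt h𝒜 hsub hT).trans
      (Nat.le_mul_of_pos_left _ hr)

theorem card_filter_inter_ne_le_of_lt_card (hInt : IsIntersecting 𝒜) (h𝒜 : LeftCompressed 𝒜)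
    (hsub : 𝒜 ⊆ uniformOn n r) (hr : 1 ≤ r)
    (hbig : r * n.choose (r - 3) < (𝒜.filter (· ∩ Icc 1 (2 * r + 1) = {2, 3})).card) :
    ((𝒜.filter (1 ∉ ·)).filter (· ∩ Icc 1 (2 * r + 1) ≠ {2, 3})).card ≤
      2 ^ (2 * r + 1) * n.choose (r - 3) := by
  have h23 : ({2, 3} : Finset ℕ) ⊆ Icc 1 (2 * r + 1) := by simp [insert_subset_iff]; omega
  have hmeet : ∀ B ∈ 𝒜, (B ∩ {2, 3}).Nonempty := fun B hB =>
    hInt.inter_nonempty_of_lt_card (Z := Icc 1 (2 * r + 1)) hsub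
      (by rwa [card_pair (by norm_num)]) hB
  have h := card_le_two_pow_mul_of_card_filter_inter_eq_le
    (F := (𝒜.filter (1 ∉ ·)).filter (· ∩ Icc 1 (2 * r + 1) ≠ {2, 3}))
    (Icc 1 (2 * r + 1)) (n.choose (r - 3)) fun T _ => ?_
  · simpa using h
  by_cases hT : T.card = 2
  · refine (card_eq_zero.2 (filter_eq_empty_iff.2 fun A hA hAT => ?_)).trans_le (Nat.zero_le _)
    obtain ⟨hA, hne⟩ := mem_filter.1 hA
    exact hne (h𝒜.inter_eq_of_forall_inter_nonempty hsub hmeet (by simp) h23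
      (card_le_two.trans_eq' rfl) (mem_filter.1 hA).1 (mem_filter.1 hA).2 (hAT ▸ hT))
  · exact (card_le_card (filter_subset_filter _ (filter_subset _ _))).trans
      (card_filter_inter_Icc_eq_le_of_card_ne_two hInt h𝒜 hsub hT)

end NonStarPart

theorem disjoint_or_two_le_card_sdiff {X : Finset ℕ} (hX : ¬ X ⊆ {2, 3})
    (hcond : 4 ≤ X.card ∨ (X.card = 3 ∧ ¬ ({2, 3} : Finset ℕ) ⊆ X) ∨
      (X.card = 2 ∧ 2 ∉ X ∧ 3 ∉ X) ∨ X.card = 1) :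
    Disjoint X {2, 3} ∨ 2 ≤ (X \ {2, 3}).card := by
  have hsplit := card_sdiff_add_card_inter X {2, 3}
  have hinter : (X ∩ {2, 3}).card ≤ 2 := (card_le_card inter_subset_right).trans card_le_two
  rcases hcond with h | ⟨h, h23⟩ | ⟨-, h2, h3⟩ | h
  · omega
  · have : (X ∩ {2, 3}).card ≠ 2 := fun h2 => h23 <|
      eq_of_subset_of_card_le inter_subset_right (h2 ▸ card_le_two) ▸ inter_subset_left
    omega
  · left
    simp [disjoint_insert_right, h2, h3]
  · left
    obtain ⟨y, rfl⟩ := card_eq_one.1 h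
    simpa using hX

section MainEstimate

variable {n r : ℕ} {X : Finset ℕ} {𝒜 : Finset (Finset ℕ)}

theorem card_hitting_filter_inter_eq_pair_le (hsub : 𝒜 ⊆ uniformOn n r) (Z : Finset ℕ)
    (hX : Disjoint X {2, 3}) :
    ((hitting 𝒜 X).filter (· ∩ Z = {2, 3})).card ≤ X.card * n.choose (r - 3) := by
  refine (card_le_card_mul_choose ((filter_subset _ _).trans ((filter_subset _ _).trans hsub))
    {2, 3} X fun A hA => ?_).trans_eq (by rw [card_pair (by norm_num)])
  obtain ⟨hA, hAT⟩ := mem_filter.1 hA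
  obtain ⟨y, hy⟩ := (mem_hitting.1 hA).2
  obtain ⟨hyA, hyX⟩ := mem_inter.1 hy
  exact ⟨hAT ▸ inter_subset_left, y, hyX, disjoint_left.1 hX hyX, hyA⟩

theorem card_filter_inter_Icc_eq_pair_le (hsub : 𝒜 ⊆ uniformOn n r) :
    (𝒜.filter (· ∩ Icc 1 (2 * r + 1) = {2, 3})).card ≤ (n - (2 * r + 1)).choose (r - 2) := by
  refine (card_filter_inter_eq_le hsub _ _).trans (Nat.choose_le_choose _ ?_) |>.trans_eq
    (by rw [card_pair (by norm_num)])
  calc (Icc 1 n \ Icc 1 (2 * r + 1)).card ≤ (Icc (2 * r + 2) n).card :=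
        card_le_card fun y hy => by simp only [mem_sdiff, mem_Icc] at hy ⊢; omega
    _ = n - (2 * r + 1) := by rw [Nat.card_Icc]; omega

theorem card_hitting_filter_one_notMem_le_add (Z T : Finset ℕ) :
    ((hitting 𝒜 X).filter (1 ∉ ·)).card ≤ ((hitting 𝒜 X).filter (· ∩ Z = T)).card +
      ((𝒜.filter (1 ∉ ·)).filter (· ∩ Z ≠ T)).card := by
  rw [← card_filter_add_card_filter_not (fun A : Finset ℕ => A ∩ Z = T)]
  exact Nat.add_le_add (card_le_card (filter_subset_filter _ (filter_subset _ _)))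
    (card_le_card (filter_subset_filter _ (filter_subset_filter _ (filter_subset _ _))))

theorem card_hitting_filter_one_notMem_le_of_lt_card (hInt : IsIntersecting 𝒜)
    (h𝒜 : LeftCompressed 𝒜) (hsub : 𝒜 ⊆ uniformOn n r) (hr : 3 ≤ r) (hX2 : ∀ y ∈ X, 2 ≤ y)
    (hXr : X.card ≤ r) (hXn : ∀ y ∈ X, y ≤ n) (hX23 : Disjoint X {2, 3} ∨ 2 ≤ (X \ {2, 3}).card)
    (hbig : r * n.choose (r - 3) < (𝒜.filter (· ∩ Icc 1 (2 * r + 1) = {2, 3})).card)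
    (hn : 2 ^ (2 * r + 1) * (r + 1) * n.choose (r - 3) ≤ (n - (r + 2)).choose (r - 2))
    (hE : (n - (r + 2)).choose (r - 2) ≤ ((hitting (star n r) X).filter (· ∉ 𝒜)).card) :
    ((hitting 𝒜 X).filter (1 ∉ ·)).card ≤ ((hitting (star n r) X).filter (· ∉ 𝒜)).card := by
  set Z := Icc 1 (2 * r + 1)
  set C := n.choose (r - 3)
  have hsplit := card_hitting_filter_one_notMem_le_add (𝒜 := 𝒜) (X := X) Z {2, 3}
  have hrest := card_filter_inter_ne_le_of_lt_card hInt h𝒜 hsub (by omega) hbig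
  have hrest' : 2 ^ (2 * r + 1) * C ≤ 2 ^ (2 * r + 1) * (r + 1) * C := by
    rw [mul_assoc]; gcongr; exact Nat.le_mul_of_pos_left _ (by omega)
  rcases hX23 with hX23 | hX23
  · calc _ ≤ r * C + 2 ^ (2 * r + 1) * C := hsplit.trans <| Nat.add_le_add
          ((card_hitting_filter_inter_eq_pair_le hsub Z hX23).trans (Nat.mul_le_mul_right _ hXr))
          hrest
      _ ≤ 2 ^ (2 * r + 1) * (r + 1) * C := by
        have := Nat.le_mul_of_pos_left (r * C) (Nat.two_pow_pos (2 * r + 1))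
        nlinarith
      _ ≤ _ := hn.trans hE
  · obtain ⟨a, ha, b, hb, hab⟩ := one_lt_card.1 hX23
    have hIcc : ∀ y ∈ X \ {2, 3}, y ∈ Icc 4 n := fun y hy => by
      obtain ⟨hyX, hy23⟩ := mem_sdiff.1 hy
      have := hX2 y hyX
      have := hXn y hyX
      simp only [mem_insert, mem_singleton] at hy23
      exact mem_Icc.2 ⟨by omega, by omega⟩
    calc _ ≤ (n - 5).choose (r - 2) + (n - 4).choose (r - 2) := hsplit.trans <| Nat.add_le_add
          ((card_le_card (filter_subset_filter _ (filter_subset _ _))).trans <|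
            (card_filter_inter_Icc_eq_pair_le hsub).trans (Nat.choose_le_choose _ (by omega)))
          (hrest.trans <| hrest'.trans <| hn.trans (Nat.choose_le_choose _ (by omega)))
      _ ≤ _ := (add_comm _ _).trans_le <|
        choose_add_choose_le_card_filter_notMem_of_meets_pair
          (fun B hB => hInt.inter_nonempty_of_lt_card (Z := Z) hsub
            (by rwa [card_pair (by norm_num)]) hB)
          (mem_sdiff.1 ha).1 (mem_sdiff.1 hb).1 hab (hIcc a ha) (hIcc b hb) (by omega)

theorem card_hitting_filter_one_notMem_le (hInt : IsIntersecting 𝒜) (h𝒜 : LeftCompressed 𝒜)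
    (hsub : 𝒜 ⊆ uniformOn n r) (hr : 3 ≤ r) (hX2 : ∀ y ∈ X, 2 ≤ y) (hXr : X.card ≤ r)
    (hXn : ∀ y ∈ X, y ≤ n) (hX23 : Disjoint X {2, 3} ∨ 2 ≤ (X \ {2, 3}).card) {x : ℕ}
    (hxX : x ∈ X) (hx : r + 2 ≤ x)
    (hn : 2 ^ (2 * r + 1) * (r + 1) * n.choose (r - 3) ≤ (n - (r + 2)).choose (r - 2)) :
    ((hitting 𝒜 X).filter (1 ∉ ·)).card ≤ ((hitting (star n r) X).filter (· ∉ 𝒜)).card := by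
  rcases ((hitting 𝒜 X).filter (1 ∉ ·)).eq_empty_or_nonempty with h0 | ⟨A, hA⟩
  · simp [h0]
  obtain ⟨hA, h1⟩ := mem_filter.1 hA
  have hE := choose_le_card_filter_notMem_of_meets_Icc (X := X)
    (fun B hB => hInt B hB _ (h𝒜.Icc_two_mem hsub (mem_hitting.1 hA).1 h1)) hxX hx
    (hXn x hxX) (by omega)
  by_cases hbig : r * n.choose (r - 3) < (𝒜.filter (· ∩ Icc 1 (2 * r + 1) = {2, 3})).card
  · exact card_hitting_filter_one_notMem_le_of_lt_card hInt h𝒜 hsub hr hX2 hXr hXn hX23 hbig hn hE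
  calc _ ≤ (𝒜.filter (1 ∉ ·)).card := card_le_card (filter_subset_filter _ (filter_subset _ _))
    _ ≤ 2 ^ (2 * r + 1) * (r * n.choose (r - 3)) :=
      card_filter_one_notMem_le_of_card_le hInt h𝒜 hsub (by omega) (not_lt.1 hbig)
    _ ≤ 2 ^ (2 * r + 1) * (r + 1) * n.choose (r - 3) := by rw [mul_assoc]; gcongr; omega
    _ ≤ _ := hn.trans hE

end MainEstimate

theorem stmt18 (r : ℕ) (hr : 3 ≤ r) (X : Finset ℕ) (hX2 : ∀ x ∈ X, 2 ≤ x)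
    (hcard : X.card ≤ r) (hnsub : ¬ X ⊆ Icc 2 (r + 1))
    (hcond : 4 ≤ X.card ∨ (X.card = 3 ∧ ¬ ({2, 3} : Finset ℕ) ⊆ X) ∨
      (X.card = 2 ∧ 2 ∉ X ∧ 3 ∉ X) ∨ X.card = 1) :
    ∃ N : ℕ, ∀ n : ℕ, N ≤ n → IsGood n r X := by
  obtain ⟨x, hxX, hxI⟩ := not_subset.1 hnsub
  have hx : r + 2 ≤ x := by
    have := hX2 x hxX
    simp only [mem_Icc, not_and_or, not_le] at hxI
    omega
  have hX23 := disjoint_or_two_le_card_sdiff (fun h => hnsub (h.trans (by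
    simp [insert_subset_iff]; omega))) hcond
  obtain ⟨N, hN⟩ := exists_mul_choose_le_choose_sub (2 ^ (2 * r + 1) * (r + 1)) (r + 2) (r - 3)
  refine ⟨N + X.sup id, fun n hn 𝒜 hsub h𝒜 hInt => card_hitting_le_of_card_filter_le hsub ?_⟩
  refine card_hitting_filter_one_notMem_le hInt h𝒜 hsub hr hX2 hcard
    (fun y hy => (le_sup (f := id) hy).trans (by omega)) hX23 hxX hx ?_
  rw [show r - 2 = r - 3 + 1 by omega]
  exact hN n (by omega)
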